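/- arXiv:2101.10864 — 2 statements merged into one kernel-verified Lean document; each statement's English description precedes it below -/
import Mathlib

section
/- Let ξ, ω ∈ R and define the milling-orbit field A(t,z) = A(−ωt, e₃) · A(ξz, e₁) ∈ SO₃(R). Then with Ω = Ae₁, u = Ae₂, v = Ae₃ (functions of t and z only), one has r := (∇·Ω)Ω + (∇·u)u + (∇·v)v = ξ(sin(ωt), cos(ωt), 0)ᵀ and δ := [(Ω·∇)u]·v + [(u·∇)v]·Ω + [(v·∇)Ω]·u = 0, where spatial derivatives act only through the z variable. -/
/-!
Written out, `Ω = (cos ωt, -sin ωt, 0)` does not depend on `z`, while `∂_z u = ξ v` and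
`∂_z v = -ξ u`. Hence `∇·Ω = 0`, `∇·u = ξ v₃`, `∇·v = -ξ u₃`, and `r = ξ (v₃ u - u₃ v)`, which is
`ξ (sin ωt, cos ωt, 0)` by `sin² + cos² = 1`. In `δ` the first term carries the factor `Ω₃ = 0`,
the third the factor `∂_z Ω = 0`, and the second equals `-ξ u₃ (u·Ω) = 0`.
-/

open Matrix Real

noncomputable section

/-- The antisymmetric cross-product matrix `[w]ₓ` of a vector `w ∈ ℝ³`. -/
def crossMat (w : Fin 3 → ℝ) : Matrix (Fin 3) (Fin 3) ℝ :=
  !![0, -w 2, w 1; w 2, 0, -w 0; -w 1, w 0, 0]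

/-- Rodrigues' formula: `A(θ,n) = I + sin θ [n]ₓ + (1 - cos θ) [n]ₓ²`. -/
def rodrigues (θ : ℝ) (n : Fin 3 → ℝ) : Matrix (Fin 3) (Fin 3) ℝ :=
  1 + Real.sin θ • crossMat n + (1 - Real.cos θ) • (crossMat n * crossMat n)

/-- The milling-orbit field `A(t,z) = A(-ωt, e₃) · A(ξz, e₁)`. -/
def MO (ξ ω t z : ℝ) : Matrix (Fin 3) (Fin 3) ℝ :=
  rodrigues (-ω * t) ![0, 0, 1] * rodrigues (ξ * z) ![1, 0, 0]

/-- The column `Ω = A e₁` of the milling orbit. -/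
def MOΩ (ξ ω t z : ℝ) : Fin 3 → ℝ := fun i => MO ξ ω t z i 0
/-- The column `u = A e₂` of the milling orbit. -/
def MOu (ξ ω t z : ℝ) : Fin 3 → ℝ := fun i => MO ξ ω t z i 1
/-- The column `v = A e₃` of the milling orbit. -/
def MOv (ξ ω t z : ℝ) : Fin 3 → ℝ := fun i => MO ξ ω t z i 2

/-- Since the fields depend only on the third spatial coordinate `z`, the
divergence of such a field is the `z`-derivative of its third component. -/
def divz (B : ℝ → ℝ → Fin 3 → ℝ) (t z : ℝ) : ℝ :=
  deriv (fun y => B t y 2) z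

/-- `(B·∇)C` for fields depending only on the third spatial coordinate `z`. -/
def dirDerivz (B C : ℝ → ℝ → Fin 3 → ℝ) (t z : ℝ) : Fin 3 → ℝ :=
  fun i => B t z 2 * deriv (fun y => C t y i) z

lemma hasDerivAt_sin_const_mul (ξ z : ℝ) :
    HasDerivAt (fun y => sin (ξ * y)) (ξ * cos (ξ * z)) z := by
  simpa [mul_comm] using ((hasDerivAt_id z).const_mul ξ).sin

lemma hasDerivAt_cos_const_mul (ξ z : ℝ) :
    HasDerivAt (fun y => cos (ξ * y)) (-(ξ * sin (ξ * z))) z := by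
  simpa [mul_comm] using ((hasDerivAt_id z).const_mul ξ).cos

lemma divz_eq_of_hasDerivAt {B : ℝ → ℝ → Fin 3 → ℝ} {B' : Fin 3 → ℝ} {t z : ℝ}
    (h : HasDerivAt (B t) B' z) : divz B t z = B' 2 :=
  (hasDerivAt_pi.1 h 2).deriv

lemma dirDerivz_eq_of_hasDerivAt (B : ℝ → ℝ → Fin 3 → ℝ) {C : ℝ → ℝ → Fin 3 → ℝ}
    {C' : Fin 3 → ℝ} {t z : ℝ} (h : HasDerivAt (C t) C' z) :
    dirDerivz B C t z = B t z 2 • C' :=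
  funext fun i => congrArg (B t z 2 * ·) (hasDerivAt_pi.1 h i).deriv

lemma rodrigues_e₃ (θ : ℝ) : rodrigues θ ![0, 0, 1] =
    !![cos θ, -sin θ, 0; sin θ, cos θ, 0; 0, 0, 1] := by
  ext i j
  fin_cases i <;> fin_cases j <;> simp [rodrigues, crossMat]

lemma rodrigues_e₁ (θ : ℝ) : rodrigues θ ![1, 0, 0] =
    !![1, 0, 0; 0, cos θ, -sin θ; 0, sin θ, cos θ] := by
  ext i j
  fin_cases i <;> fin_cases j <;> simp [rodrigues, crossMat]

lemma MO_eq (ξ ω t z : ℝ) : MO ξ ω t z =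
    !![cos (ω * t), sin (ω * t) * cos (ξ * z), -(sin (ω * t) * sin (ξ * z));
       -sin (ω * t), cos (ω * t) * cos (ξ * z), -(cos (ω * t) * sin (ξ * z));
       0, sin (ξ * z), cos (ξ * z)] := by
  rw [MO, rodrigues_e₃, rodrigues_e₁, Matrix.mul_fin_three]
  simp [neg_mul]

lemma MOΩ_eq (ξ ω t z : ℝ) : MOΩ ξ ω t z = ![cos (ω * t), -sin (ω * t), 0] := by
  ext i; fin_cases i <;> simp [MOΩ, MO_eq]

lemma MOu_eq (ξ ω t z : ℝ) :
    MOu ξ ω t z = ![sin (ω * t) * cos (ξ * z), cos (ω * t) * cos (ξ * z), sin (ξ * z)] := by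
  ext i; fin_cases i <;> simp [MOu, MO_eq]

lemma MOv_eq (ξ ω t z : ℝ) :
    MOv ξ ω t z = ![-(sin (ω * t) * sin (ξ * z)), -(cos (ω * t) * sin (ξ * z)), cos (ξ * z)] := by
  ext i; fin_cases i <;> simp [MOv, MO_eq]

lemma hasDerivAt_MOΩ (ξ ω t z : ℝ) : HasDerivAt (MOΩ ξ ω t) 0 z := by
  rw [show MOΩ ξ ω t = fun _ => _ from funext (MOΩ_eq ξ ω t)]; exact hasDerivAt_const z _

lemma hasDerivAt_MOu (ξ ω t z : ℝ) : HasDerivAt (MOu ξ ω t) (ξ • MOv ξ ω t z) z := by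
  have hs := hasDerivAt_sin_const_mul ξ z
  have hc := hasDerivAt_cos_const_mul ξ z
  rw [hasDerivAt_pi]
  intro i
  fin_cases i <;> simp only [Fin.zero_eta, Fin.mk_one, Fin.reduceFinMk, Fin.isValue, MOu_eq, MOv_eq,
    cons_val_zero, cons_val_one, cons_val, Pi.smul_apply, smul_eq_mul]
  · exact (hc.const_mul _).congr_deriv (by ring)
  · exact (hc.const_mul _).congr_deriv (by ring)
  · exact hs

lemma hasDerivAt_MOv (ξ ω t z : ℝ) : HasDerivAt (MOv ξ ω t) (-ξ • MOu ξ ω t z) z := by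
  have hs := hasDerivAt_sin_const_mul ξ z
  have hc := hasDerivAt_cos_const_mul ξ z
  rw [hasDerivAt_pi]
  intro i
  fin_cases i <;> simp only [Fin.zero_eta, Fin.mk_one, Fin.reduceFinMk, Fin.isValue, MOu_eq, MOv_eq,
    cons_val_zero, cons_val_one, cons_val, Pi.smul_apply, smul_eq_mul]
  · exact (hs.const_mul _).fun_neg.congr_deriv (by ring)
  · exact (hs.const_mul _).fun_neg.congr_deriv (by ring)
  · exact hc.congr_deriv (by ring)

theorem milling_orbit_r_delta (ξ ω : ℝ) (t z : ℝ) :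
    (fun i => divz (MOΩ ξ ω) t z * MOΩ ξ ω t z i
        + divz (MOu ξ ω) t z * MOu ξ ω t z i
        + divz (MOv ξ ω) t z * MOv ξ ω t z i) =
      ![ξ * Real.sin (ω * t), ξ * Real.cos (ω * t), 0] ∧
    (∑ i, dirDerivz (MOΩ ξ ω) (MOu ξ ω) t z i * MOv ξ ω t z i)
      + (∑ i, dirDerivz (MOu ξ ω) (MOv ξ ω) t z i * MOΩ ξ ω t z i)
      + (∑ i, dirDerivz (MOv ξ ω) (MOΩ ξ ω) t z i * MOu ξ ω t z i)
      = 0 := by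
  have hΩ := hasDerivAt_MOΩ ξ ω t z
  have hu := hasDerivAt_MOu ξ ω t z
  have hv := hasDerivAt_MOv ξ ω t z
  have hpyth := sin_sq_add_cos_sq (ξ * z)
  constructor
  · rw [divz_eq_of_hasDerivAt hΩ, divz_eq_of_hasDerivAt hu, divz_eq_of_hasDerivAt hv]
    ext i
    fin_cases i <;> simp only [Fin.zero_eta, Fin.mk_one, Fin.reduceFinMk, Fin.isValue, MOu_eq,
      MOv_eq, cons_val_zero, cons_val_one, cons_val, Pi.smul_apply, Pi.zero_apply, smul_eq_mul]
    · linear_combination ξ * sin (ω * t) * hpyth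
    · linear_combination ξ * cos (ω * t) * hpyth
    · ring
  · rw [dirDerivz_eq_of_hasDerivAt _ hu, dirDerivz_eq_of_hasDerivAt _ hv,
      dirDerivz_eq_of_hasDerivAt _ hΩ]
    have hΩ₂ : MOΩ ξ ω t z 2 = 0 := by simp [MOΩ_eq]
    have horth : ∑ i, MOu ξ ω t z i * MOΩ ξ ω t z i = 0 := by
      simp only [MOu_eq, MOΩ_eq, Fin.sum_univ_three, Fin.isValue, cons_val_zero, cons_val_one,
        cons_val]
      ring
    simp [hΩ₂, mul_assoc, ← Finset.mul_sum, horth]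
end
end

section
/- Fix ξ ∈ R, constants c₂, c₄ ∈ R, and set λ = c₂ + c₄. Then the pair (ρ, A) with ρ ≡ ρ₀ constant and A(t,x,y,z) = A(ξ(x−λt), e₁) solves the SOHB system ∂ₜρ + c₁∇ₓ·(ρ A e₁) = 0 and (∂ₜ + c₂(Ae₁)·∇ₓ)A + [(Ae₁)×(c₃∇ₓ log ρ + c₄ r) + c₄ δ (Ae₁)]ₓ A = 0, with r and δ as defined from the frame columns of A. -/
open Matrix Real

noncomputable section

/-- Partial derivative `∂ⱼ f` of a scalar field on `ℝ³`. -/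
def pd (j : Fin 3) (f : (Fin 3 → ℝ) → ℝ) (x : Fin 3 → ℝ) : ℝ :=
  fderiv ℝ f x (Pi.single j 1)

/-- The cross product of two vectors in `ℝ³`. -/
def crossVec (a b : Fin 3 → ℝ) : Fin 3 → ℝ :=
  ![a 1 * b 2 - a 2 * b 1, a 2 * b 0 - a 0 * b 2, a 0 * b 1 - a 1 * b 0]

/-- Column `k` of a time-dependent matrix field (`k = 0,1,2` give `Ω, u, v`). -/
def col (A : ℝ → (Fin 3 → ℝ) → Matrix (Fin 3) (Fin 3) ℝ) (k : Fin 3)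
    (t : ℝ) (x : Fin 3 → ℝ) : Fin 3 → ℝ :=
  fun i => A t x i k

/-- The divergence of a time-dependent vector field on `ℝ³`. -/
def divg (B : ℝ → (Fin 3 → ℝ) → Fin 3 → ℝ) (t : ℝ) (x : Fin 3 → ℝ) : ℝ :=
  ∑ j, pd j (fun y => B t y j) x

/-- The directional derivative `(B·∇)C` of time-dependent vector fields. -/
def dirD (B C : ℝ → (Fin 3 → ℝ) → Fin 3 → ℝ) (t : ℝ) (x : Fin 3 → ℝ) :
    Fin 3 → ℝ :=
  fun i => ∑ j, B t x j * pd j (fun y => C t y i) x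

/-- The vector `r = (∇·Ω)Ω + (∇·u)u + (∇·v)v` built from the columns of `A`. -/
def rvec (A : ℝ → (Fin 3 → ℝ) → Matrix (Fin 3) (Fin 3) ℝ) (t : ℝ)
    (x : Fin 3 → ℝ) : Fin 3 → ℝ :=
  fun i => divg (col A 0) t x * col A 0 t x i + divg (col A 1) t x * col A 1 t x i
    + divg (col A 2) t x * col A 2 t x i

/-- The scalar `δ = [(Ω·∇)u]·v + [(u·∇)v]·Ω + [(v·∇)Ω]·u`. -/
def deltaS (A : ℝ → (Fin 3 → ℝ) → Matrix (Fin 3) (Fin 3) ℝ) (t : ℝ)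
    (x : Fin 3 → ℝ) : ℝ :=
  (∑ i, dirD (_root_.col A 0) (_root_.col A 1) t x i * _root_.col A 2 t x i)
    + (∑ i, dirD (_root_.col A 1) (_root_.col A 2) t x i * _root_.col A 0 t x i)
    + (∑ i, dirD (_root_.col A 2) (_root_.col A 0) t x i * _root_.col A 1 t x i)

/-- The instantaneous rotation vector
`w = Ω × (c₃ ∇ log ρ + c₄ r) + c₄ δ Ω` of the SOHB system. -/
def wvec (c₃ c₄ : ℝ) (ρ : ℝ → (Fin 3 → ℝ) → ℝ)
    (A : ℝ → (Fin 3 → ℝ) → Matrix (Fin 3) (Fin 3) ℝ) (t : ℝ)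
    (x : Fin 3 → ℝ) : Fin 3 → ℝ :=
  fun i =>
    crossVec (col A 0 t x)
      (fun j => c₃ * pd j (fun y => Real.log (ρ t y)) x + c₄ * rvec A t x j) i
    + c₄ * deltaS A t x * col A 0 t x i

/-- `(ρ, A)` solves the SOHB system. -/
def SolvesSOHB (c₁ c₂ c₃ c₄ : ℝ) (ρ : ℝ → (Fin 3 → ℝ) → ℝ)
    (A : ℝ → (Fin 3 → ℝ) → Matrix (Fin 3) (Fin 3) ℝ) : Prop :=
  (∀ t x, deriv (fun s => ρ s x) t
      + c₁ * ∑ j, pd j (fun y => ρ t y * A t y j 0) x = 0) ∧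
  (∀ t x i j, deriv (fun s => A s x i j) t
      + c₂ * (∑ k, A t x k 0 * pd k (fun y => A t y i j) x)
      + (crossMat (wvec c₃ c₄ ρ A t x) * A t x) i j = 0)

/-!
Along the helical wave the frame is `A = R(θ)` with phase `θ = ξ (x₀ - λ t)`, and `R' = [e₁]ₓ R` for
rotations about `e₁`. Since `Ω = e₁` is constant, the density equation is trivial, `∇ log ρ = 0`,
every column is divergence free (so `r = 0`), and `δ = ξ |v|² = ξ`; hence the rotation vector is
`c₄ ξ e₁`. The three terms of the frame equation are then `-ξλ`, `c₂ ξ` and `c₄ ξ` times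
`[e₁]ₓ R`, which cancel exactly when `λ = c₂ + c₄`.
-/

def rotX (θ : ℝ) : Matrix (Fin 3) (Fin 3) ℝ :=
  !![1, 0, 0; 0, cos θ, -sin θ; 0, sin θ, cos θ]

lemma rodrigues_e₁_s14 (θ : ℝ) : rodrigues θ ![1, 0, 0] = rotX θ := by
  ext i j
  fin_cases i <;> fin_cases j <;>
    simp [rodrigues, rotX, crossMat]

lemma crossMat_smul (a : ℝ) (w : Fin 3 → ℝ) : crossMat (a • w) = a • crossMat w := by
  ext i j
  fin_cases i <;> fin_cases j <;> simp [crossMat]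

lemma hasDerivAt_rotX_apply (θ : ℝ) (i j : Fin 3) :
    HasDerivAt (fun φ => rotX φ i j) ((crossMat ![1, 0, 0] * rotX θ) i j) θ := by
  fin_cases i <;> fin_cases j <;>
    simp [rotX, crossMat, Matrix.mul_apply, Fin.sum_univ_three, hasDerivAt_const,
      hasDerivAt_sin, hasDerivAt_cos]
  exact (hasDerivAt_sin θ).neg

lemma pd_comp_apply {g : ℝ → ℝ} {g' : ℝ} {x : Fin 3 → ℝ} {m : Fin 3}
    (hg : HasDerivAt g g' (x m)) (k : Fin 3) :
    pd k (fun y => g (y m)) x = (Pi.single k 1 : Fin 3 → ℝ) m * g' := by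
  have hcomp : HasFDerivAt (fun y => g (y m)) _ x := hg.hasFDerivAt.comp x (hasFDerivAt_apply m x)
  rw [pd, hcomp.fderiv]
  simp [mul_comm]

def helicalWave (ξ lam t : ℝ) (x : Fin 3 → ℝ) : Matrix (Fin 3) (Fin 3) ℝ :=
  rotX (ξ * (x 0 - lam * t))

section helicalWave

variable (ξ lam t : ℝ) (x : Fin 3 → ℝ)

lemma deriv_helicalWave_time (i j : Fin 3) :
    deriv (fun s => helicalWave ξ lam s x i j) t
      = -(ξ * lam) * (crossMat ![1, 0, 0] * helicalWave ξ lam t x) i j := by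
  have hphase : HasDerivAt (fun s => ξ * (x 0 - lam * s)) (-(ξ * lam)) t := by
    simpa [mul_comm] using (((hasDerivAt_id t).const_mul lam).const_sub (x 0)).const_mul ξ
  exact ((hasDerivAt_rotX_apply _ i j).comp t hphase).deriv.trans (mul_comm _ _)

lemma pd_helicalWave (k i j : Fin 3) :
    pd k (fun y => helicalWave ξ lam t y i j) x
      = (Pi.single k 1 : Fin 3 → ℝ) 0
        * (ξ * (crossMat ![1, 0, 0] * helicalWave ξ lam t x) i j) := by
  have hphase : HasDerivAt (fun a => ξ * (a - lam * t)) ξ (x 0) := by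
    simpa using ((hasDerivAt_id (x 0)).sub_const (lam * t)).const_mul ξ
  exact (pd_comp_apply ((hasDerivAt_rotX_apply _ i j).comp (x 0) hphase) k).trans
    (by unfold helicalWave; ring)

lemma col_zero_helicalWave : _root_.col (helicalWave ξ lam) 0 t x = ![1, 0, 0] := by
  funext i
  fin_cases i <;> simp [_root_.col, helicalWave, rotX]

lemma divg_col_helicalWave (k : Fin 3) : divg (_root_.col (helicalWave ξ lam) k) t x = 0 := by
  simp [divg, _root_.col, pd_helicalWave, Fin.sum_univ_three, Matrix.mul_apply, crossMat]

lemma deltaS_helicalWave : deltaS (helicalWave ξ lam) t x = ξ := by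
  simp only [deltaS, dirD, _root_.col, pd_helicalWave]
  simp [Fin.sum_univ_three, Matrix.mul_apply, crossMat, helicalWave, rotX]
  linear_combination ξ * sin_sq_add_cos_sq (ξ * (x 0 - lam * t))

lemma wvec_helicalWave (c₃ c₄ ρ₀ : ℝ) :
    wvec c₃ c₄ (fun _ _ => ρ₀) (helicalWave ξ lam) t x = (c₄ * ξ) • ![1, 0, 0] := by
  funext i
  fin_cases i <;>
    simp [wvec, rvec, crossVec, divg_col_helicalWave, deltaS_helicalWave, col_zero_helicalWave, pd]

end helicalWave

theorem helical_wave_solves_SOHB_general (c₁ c₂ c₃ c₄ ξ lam ρ₀ : ℝ)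
    (hlam : lam = c₂ + c₄) :
    SolvesSOHB c₁ c₂ c₃ c₄ (fun _ _ => ρ₀)
      (fun t x =>
        rodrigues (ξ * (x 0 - lam * t)) ![1, 0, 0]) := by
  have hA : (fun t x => rodrigues (ξ * (x 0 - lam * t)) ![1, 0, 0]) = helicalWave ξ lam := by
    funext t x
    exact rodrigues_e₁_s14 _
  rw [hA]
  refine ⟨fun t x => ?_, fun t x i j => ?_⟩
  · have hΩ (y : Fin 3 → ℝ) (j : Fin 3) : helicalWave ξ lam t y j 0 = ![1, 0, 0] j :=
      congrFun (col_zero_helicalWave ξ lam t y) j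
    simp [hΩ, pd]
  · have advection : ∑ k, helicalWave ξ lam t x k 0 * pd k (fun y => helicalWave ξ lam t y i j) x
        = ξ * (crossMat ![1, 0, 0] * helicalWave ξ lam t x) i j := by
      simp only [pd_helicalWave]
      simp [Fin.sum_univ_three, helicalWave, rotX]
    rw [deriv_helicalWave_time, advection, wvec_helicalWave, crossMat_smul, smul_mul_assoc,
      Matrix.smul_apply, smul_eq_mul, hlam]
    ring

theorem helical_wave_solves_SOHB (c₁ c₂ c₃ c₄ ξ lam ρ₀ : ℝ)
    (hρ₀ : 0 < ρ₀) (hlam : lam = c₂ + c₄) :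
    SolvesSOHB c₁ c₂ c₃ c₄ (fun _ _ => ρ₀)
      (fun t x =>
        rodrigues (ξ * (x 0 - lam * t)) ![1, 0, 0]) :=
  helical_wave_solves_SOHB_general c₁ c₂ c₃ c₄ ξ lam ρ₀ hlam
end
end
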